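/- Let T be an atemporal DL-Lite TBox consisting only of disjointness axioms A ⊓ B ⊑ ⊥ between distinct concept names and functionality assertions funct(R) on role names, and let A be a finite ABox of positive atomic assertions. Define the conflict graph CG(T,A): its vertices are the assertions of A, with an edge between two distinct assertions α, β iff {α,β} is a conflicting pair (α = A(a) and β = B(a) with A ⊓ B ⊑ ⊥ ∈ T, or α = R(a,b) and β = R(a,b') with b ≠ b' and funct(R) ∈ T). Then: (i) for every vertex cover S of CG(T,A) (a set of assertions meeting every edge), the ABox A ∖ S is T-consistent; and (ii) A ∖ S is a maximal T-consistent subset of A (a repair) if and only if S is a minimal vertex cover of CG(T,A). -/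

import Mathlib

/-- Positive atomic ABox assertions: `A(a)` for a concept name `A` or `R(a,b)` for a
role name `R` (names coded by natural numbers). -/
inductive Assertion : Type
  | conc (A a : ℕ)
  | role (R a b : ℕ)
deriving DecidableEq

/-- A DL-Lite TBox consisting only of disjointness axioms `A ⊓ B ⊑ ⊥` between concept
names (recorded as pairs `(A, B)`) and functionality assertions `funct(R)` on role
names. -/
structure DTBox : Type where
  disj  : Finset (ℕ × ℕ)
  funct : Finset ℕ

/-- An atemporal DL interpretation: a nonempty domain, a rigid element for each
individual name with distinct names denoting distinct elements (unique name assumption),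
a subset for each concept name, and a binary relation for each role name. -/
structure Interp (Δ : Type) : Type where
  nonempty : Nonempty Δ
  ind  : ℕ → Δ
  ind_inj : Function.Injective ind
  conc : ℕ → Set Δ
  role : ℕ → Set (Δ × Δ)

variable {Δ : Type}

/-- A binary relation is a partial function. -/
def Functional (r : Set (Δ × Δ)) : Prop :=
  ∀ d e e', (d, e) ∈ r → (d, e') ∈ r → e = e'

/-- Satisfaction of an assertion. -/
def Interp.satA (J : Interp Δ) : Assertion → Prop
  | .conc A a => J.ind a ∈ J.conc A
  | .role R a b => (J.ind a, J.ind b) ∈ J.role R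

/-- `J` satisfies the knowledge base `(T, Ab)`. -/
def Interp.satKB (J : Interp Δ) (T : DTBox) (Ab : Finset Assertion) : Prop :=
  (∀ p ∈ T.disj, J.conc p.1 ∩ J.conc p.2 = ∅) ∧
  (∀ R ∈ T.funct, Functional (J.role R)) ∧
  (∀ α ∈ Ab, J.satA α)

/-- Consistency of a knowledge base `(T, Ab)`. -/
def Consistent (T : DTBox) (Ab : Finset Assertion) : Prop :=
  ∃ (Δ : Type) (J : Interp Δ), J.satKB T Ab

/-- `α` and `β` form a conflicting pair w.r.t. `T` (in this order): either `α = A(a)` and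
`β = B(a)` with `A ⊓ B ⊑ ⊥ ∈ T`, or `α = R(a,b)` and `β = R(a,b')` with `b ≠ b'` and
`funct(R) ∈ T`. -/
def Conflict (T : DTBox) (α β : Assertion) : Prop :=
  (∃ A B a : ℕ, α = Assertion.conc A a ∧ β = Assertion.conc B a ∧ (A, B) ∈ T.disj) ∨
  (∃ R a b b' : ℕ, α = Assertion.role R a b ∧ β = Assertion.role R a b' ∧
    b ≠ b' ∧ R ∈ T.funct)

/-- The conflict graph `CG(T, Ab)`: vertices are assertions, with an edge between two
distinct assertions of `Ab` iff they form a conflicting pair. -/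
def conflictGraph (T : DTBox) (Ab : Finset Assertion) : SimpleGraph Assertion where
  Adj α β := α ≠ β ∧ α ∈ Ab ∧ β ∈ Ab ∧ (Conflict T α β ∨ Conflict T β α)
  symm := by
    constructor
    intro α β h
    exact ⟨h.1.symm, h.2.2.1, h.2.1, h.2.2.2.symm⟩
  loopless := by
    constructor
    intro α h
    exact h.1 rfl

/-- A vertex cover of a graph: a set of vertices meeting every edge. -/
def IsVertexCover (G : SimpleGraph Assertion) (S : Finset Assertion) : Prop :=
  ∀ α β : Assertion, G.Adj α β → α ∈ S ∨ β ∈ S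

/-- A minimal vertex cover: a vertex cover no proper subset of which is a vertex cover. -/
def IsMinimalVertexCover (G : SimpleGraph Assertion) (S : Finset Assertion) : Prop :=
  IsVertexCover G S ∧ ∀ S' : Finset Assertion, S' ⊂ S → ¬ IsVertexCover G S'

/-- `B` is a maximal `T`-consistent subset (a repair) of `Ab`. -/
def IsRepair (T : DTBox) (Ab B : Finset Assertion) : Prop :=
  B ⊆ Ab ∧ Consistent T B ∧
    ∀ B' : Finset Assertion, B ⊂ B' → B' ⊆ Ab → ¬ Consistent T B'

/-! The conflict graph reduces consistency to combinatorics: an ABox is `T`-consistent exactly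
when it contains no conflicting pair, since the canonical interpretation on the individual
names, reading concepts and roles off the ABox, satisfies `T` as soon as no conflict occurs.
With disjointness only between distinct concept names no assertion conflicts with itself, so
`Ab ∖ S` is conflict-free iff `S` covers every edge of `CG(T, Ab)`. Complementation in `Ab`
turns proper supersets of `Ab ∖ S` inside `Ab` into proper subsets of `S`, so maximality of the
consistent set matches minimality of the cover. -/

namespace Finset

variable {α : Type*} [DecidableEq α]

theorem sdiff_ssubset_sdiff_iff_ssubset {r s t : Finset α} (hs : s ⊆ r) (ht : t ⊆ r) :
    r \ s ⊂ r \ t ↔ t ⊂ s := by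
  simp only [ssubset_iff_subset_ne, sdiff_subset_sdiff_iff_subset hs ht, Ne,
    sdiff_right_inj hs ht, eq_comm]

theorem forall_ssuperset_sdiff_iff {r t : Finset α} (ht : t ⊆ r) (p : Finset α → Prop) :
    (∀ u, r \ t ⊂ u → u ⊆ r → p u) ↔ ∀ t' ⊂ t, p (r \ t') := by
  constructor
  · intro h t' ht'
    exact h _ ((sdiff_ssubset_sdiff_iff_ssubset ht (ht'.subset.trans ht)).2 ht') sdiff_subset
  · intro h u htu hur
    rw [← sdiff_sdiff_eq_self hur] at htu ⊢
    exact h _ ((sdiff_ssubset_sdiff_iff_ssubset ht sdiff_subset).1 htu)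

end Finset

theorem consistent_iff_forall_not_conflict {T : DTBox} {B : Finset Assertion} :
    Consistent T B ↔ ∀ α ∈ B, ∀ β ∈ B, ¬ Conflict T α β := by
  constructor
  · rintro ⟨Δ, J, hdisj, hfunct, hsat⟩ α hα β hβ
      (⟨A, A', a, rfl, rfl, hAA'⟩ | ⟨R, a, b, b', rfl, rfl, hbb', hR⟩)
    · have hmem : J.ind a ∈ J.conc A ∩ J.conc A' := ⟨hsat _ hα, hsat _ hβ⟩
      rwa [hdisj _ hAA'] at hmem
    · exact hbb' (J.ind_inj (hfunct R hR _ _ _ (hsat _ hα) (hsat _ hβ)))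
  · intro h
    refine ⟨ℕ, ⟨⟨0⟩, id, Function.injective_id,
      fun A => {a | .conc A a ∈ B}, fun R => {p | .role R p.1 p.2 ∈ B}⟩, ?_, ?_, ?_⟩
    · intro p hp
      ext a
      simp only [Set.mem_inter_iff, Set.mem_ofPred_eq, Set.mem_empty_iff_false, iff_false,
        not_and]
      exact fun h₁ h₂ => h _ h₁ _ h₂ (.inl ⟨p.1, p.2, a, rfl, rfl, hp⟩)
    · intro R hR d e e' h₁ h₂
      by_contra hne
      exact h _ h₁ _ h₂ (.inr ⟨R, d, e, e', rfl, rfl, hne, hR⟩)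
    · rintro (⟨A, a⟩ | ⟨R, a, b⟩) hα <;> exact hα

theorem Conflict.ne {T : DTBox} (hT : ∀ p ∈ T.disj, p.1 ≠ p.2) {α β : Assertion}
    (h : Conflict T α β) : α ≠ β := by
  rcases h with ⟨A, B, a, rfl, rfl, hAB⟩ | ⟨R, a, b, b', rfl, rfl, hbb', -⟩
  · exact fun h => hT _ hAB (Assertion.conc.inj h).1
  · exact fun h => hbb' (Assertion.role.inj h).2.2

theorem consistent_sdiff_iff_isVertexCover {T : DTBox} (hT : ∀ p ∈ T.disj, p.1 ≠ p.2)
    (Ab S : Finset Assertion) :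
    Consistent T (Ab \ S) ↔ IsVertexCover (conflictGraph T Ab) S := by
  simp only [consistent_iff_forall_not_conflict, Finset.mem_sdiff]
  constructor
  · rintro h α β ⟨-, hα, hβ, hαβ | hβα⟩
    · by_contra! hS
      exact h α ⟨hα, hS.1⟩ β ⟨hβ, hS.2⟩ hαβ
    · by_contra! hS
      exact h β ⟨hβ, hS.2⟩ α ⟨hα, hS.1⟩ hβα
  · rintro hcov α ⟨hα, hαS⟩ β ⟨hβ, hβS⟩ hαβ
    rcases hcov α β ⟨hαβ.ne hT, hα, hβ, .inl hαβ⟩ with h | h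
    exacts [hαS h, hβS h]

/-- For a TBox of disjointness axioms between *distinct* concept names
and functionality assertions, and any vertex cover `S` of the conflict graph `CG(T, Ab)`:
(i) `Ab ∖ S` is `T`-consistent, and (ii) `Ab ∖ S` is a maximal `T`-consistent subset of
`Ab` (a repair) iff `S` is a minimal vertex cover of `CG(T, Ab)`. -/
theorem vertex_cover_removal_repairs (T : DTBox)
    (hT : ∀ p ∈ T.disj, p.1 ≠ p.2)
    (Ab S : Finset Assertion) (hS : S ⊆ Ab)
    (hcov : IsVertexCover (conflictGraph T Ab) S) :
    Consistent T (Ab \ S) ∧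
      (IsRepair T Ab (Ab \ S) ↔ IsMinimalVertexCover (conflictGraph T Ab) S) := by
  have hcons := consistent_sdiff_iff_isVertexCover hT Ab
  refine ⟨(hcons S).2 hcov, ?_⟩
  simp only [IsRepair, IsMinimalVertexCover, Finset.sdiff_subset, true_and,
    Finset.forall_ssuperset_sdiff_iff hS (fun u => ¬ Consistent T u), hcons, hcov]
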